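/- arXiv:1905.00146 — 6 statements merged into one kernel-verified Lean document; each statement's English description precedes it below -/
import Mathlib

section
/- Consider the finite probability space on triples (X0, X1, Q) where X0, X1 take values in {A, B} and Q takes values in {A, B, AB}, with joint distribution defined by: Pr(X0=A) = Pr(X0=B) = 1/2; Pr(X1=x1 | X0=x0) given by the two-state transition matrix with Pr(B|A) = Pr(A|B) = 0.2; and conditional query probabilities Pr(Q | X0, X1) given by: (X0,X1)=(A,A): (Q=A with prob 1/4, Q=AB with prob 3/4); (A,B): Q=B with prob 1; (B,A): Q=A with prob 1; (B,B): (Q=B with prob 1/4, Q=AB with prob 3/4). Then (i) Q is independent of X0, i.e., Pr(Q=q | X0=A) = Pr(Q=q | X0=B) for every q in {A, B, AB}; (ii) the scheme is decodable, i.e., Pr(Q=A and X1=B) = 0 and Pr(Q=B and X1=A) = 0; and (iii) Pr(Q=AB) = 3/5, so the download rate equals 1/(1 + Pr(Q=AB)) = 5/8. -/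
open Finset

/-- Request transition probabilities `Pr(X₁ = x₁ ∣ X₀ = x₀)` for the two-state Markov chain
with `α = β = 0.2`; states: `0 = A`, `1 = B`. -/
noncomputable def reqTrans : Fin 2 → Fin 2 → ℝ := fun x0 x1 => if x0 = x1 then 0.8 else 0.2

/-- Conditional query probabilities `Pr(Q = q ∣ X₀ = x₀, X₁ = x₁)` of the scheme;
queries: `0 = A`, `1 = B`, `2 = AB`. -/
noncomputable def condQ : Fin 2 → Fin 2 → Fin 3 → ℝ := fun x0 x1 q =>
  if x0 = 0 ∧ x1 = 0 then (if q = 0 then 1/4 else if q = 2 then 3/4 else 0)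
  else if x0 = 0 ∧ x1 = 1 then (if q = 1 then 1 else 0)
  else if x0 = 1 ∧ x1 = 0 then (if q = 0 then 1 else 0)
  else (if q = 1 then 1/4 else if q = 2 then 3/4 else 0)

/-- Joint distribution of `(X₀, X₁, Q)`: `Pr(X₀ = A) = Pr(X₀ = B) = 1/2` (the stationary
distribution), then the Markov transition, then the conditional query distribution. -/
noncomputable def joint : Fin 2 → Fin 2 → Fin 3 → ℝ := fun x0 x1 q =>
  (1/2) * reqTrans x0 x1 * condQ x0 x1 q

theorem stmt0 :
    -- (i) privacy: Pr(Q = q ∣ X₀ = A) = Pr(Q = q ∣ X₀ = B) for every q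
    (∀ q : Fin 3,
      (∑ x1, joint 0 x1 q) / (∑ x1, ∑ q', joint 0 x1 q')
        = (∑ x1, joint 1 x1 q) / (∑ x1, ∑ q', joint 1 x1 q')) ∧
    -- (ii) decodability: Pr(Q = A ∧ X₁ = B) = 0 and Pr(Q = B ∧ X₁ = A) = 0
    (∑ x0, joint x0 1 0) = 0 ∧
    (∑ x0, joint x0 0 1) = 0 ∧
    -- (iii) Pr(Q = AB) = 3/5, hence the download rate is 1/(1 + Pr(Q = AB)) = 5/8
    (∑ x0, ∑ x1, joint x0 x1 2) = 3/5 ∧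
    1 / (1 + ∑ x0, ∑ x1, joint x0 x1 2) = 5/8 := by
  refine ⟨fun q => ?_, ?_, ?_, ?_, ?_⟩ <;>
    (try fin_cases q) <;>
    simp [joint, reqTrans, condQ, Fin.sum_univ_two, Fin.sum_univ_three] <;> norm_num
end

section
/- Let p be a probability distribution on triples (X0, Xt, Q), where X0 and Xt take values in {A, B} and Q takes values in {a, b, ab}. Assume: (i) 0 < Pr(X0=A) < 1; (ii) Q is independent of X0, i.e., Pr(Q=q and X0=x) = Pr(Q=q) * Pr(X0=x) for all q and x; (iii) decodability: Pr(Q=a and Xt=B) = 0 and Pr(Q=b and Xt=A) = 0. Then Pr(Q=a) + Pr(Q=b) <= min( Pr(Xt=A | X0=A), Pr(Xt=A | X0=B) ) + min( Pr(Xt=B | X0=A), Pr(Xt=B | X0=B) ), where conditional probabilities are defined as the usual ratios (well-defined since 0 < Pr(X0=A) < 1). -/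
open Finset

/- Encoding: `X₀, Xₜ : Fin 2` with `0 = A`, `1 = B`; `Q : Fin 3` with `0 = a`, `1 = b`,
`2 = ab`. The joint distribution is `p x0 xt q = Pr(X₀ = x0, Xₜ = xt, Q = q)`. -/

theorem stmt3 (p : Fin 2 → Fin 2 → Fin 3 → ℝ)
    -- p is a probability distribution
    (hnn : ∀ x0 xt q, 0 ≤ p x0 xt q)
    (hsum : ∑ x0, ∑ xt, ∑ q, p x0 xt q = 1)
    -- (i) 0 < Pr(X₀ = A) < 1
    (hX0pos : 0 < ∑ xt, ∑ q, p 0 xt q)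
    (hX0lt : (∑ xt, ∑ q, p 0 xt q) < 1)
    -- (ii) independence: Pr(Q = q ∧ X₀ = x0) = Pr(Q = q) · Pr(X₀ = x0)
    (hind : ∀ (q : Fin 3) (x0 : Fin 2),
      (∑ xt, p x0 xt q)
        = (∑ x0', ∑ xt, p x0' xt q) * (∑ xt, ∑ q', p x0 xt q'))
    -- (iii) decodability: Pr(Q = a ∧ Xₜ = B) = 0 and Pr(Q = b ∧ Xₜ = A) = 0
    (hdeca : ∑ x0, p x0 1 0 = 0)
    (hdecb : ∑ x0, p x0 0 1 = 0) :
    -- Pr(Q = a) + Pr(Q = b)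
    (∑ x0, ∑ xt, p x0 xt 0) + (∑ x0, ∑ xt, p x0 xt 1)
      -- ≤ min(Pr(Xₜ=A∣X₀=A), Pr(Xₜ=A∣X₀=B)) + min(Pr(Xₜ=B∣X₀=A), Pr(Xₜ=B∣X₀=B))
      ≤ min ((∑ q, p 0 0 q) / (∑ xt, ∑ q, p 0 xt q))
            ((∑ q, p 1 0 q) / (∑ xt, ∑ q, p 1 xt q))
        + min ((∑ q, p 0 1 q) / (∑ xt, ∑ q, p 0 xt q))
              ((∑ q, p 1 1 q) / (∑ xt, ∑ q, p 1 xt q)) := by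
  have h00 := hind 0 0
  have h01 := hind 0 1
  have h10 := hind 1 0
  have h11 := hind 1 1
  simp only [Fin.sum_univ_two, Fin.sum_univ_three] at *
  -- zeros from decodability
  have z1 : p 0 1 0 = 0 := by linarith [hnn 0 1 0, hnn 1 1 0]
  have z2 : p 1 1 0 = 0 := by linarith [hnn 0 1 0, hnn 1 1 0]
  have z3 : p 0 0 1 = 0 := by linarith [hnn 0 0 1, hnn 1 0 1]
  have z4 : p 1 0 1 = 0 := by linarith [hnn 0 0 1, hnn 1 0 1]
  set PA : ℝ := p 0 0 0 + p 0 0 1 + p 0 0 2 + (p 0 1 0 + p 0 1 1 + p 0 1 2) with hPA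
  set PB : ℝ := p 1 0 0 + p 1 0 1 + p 1 0 2 + (p 1 1 0 + p 1 1 1 + p 1 1 2) with hPB
  have hPBpos : 0 < PB := by linarith
  -- Pr(Q=a) and Pr(Q=b)
  have ha0 : (p 0 0 0 + p 0 1 0 + (p 1 0 0 + p 1 1 0)) ≤ (p 0 0 0 + p 0 0 1 + p 0 0 2) / PA := by
    rw [le_div_iff₀ hX0pos]
    linarith [hnn 0 0 1, hnn 0 0 2]
  have ha1 : (p 0 0 0 + p 0 1 0 + (p 1 0 0 + p 1 1 0)) ≤ (p 1 0 0 + p 1 0 1 + p 1 0 2) / PB := by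
    rw [le_div_iff₀ hPBpos]
    linarith [hnn 1 0 1, hnn 1 0 2]
  have hb0 : (p 0 0 1 + p 0 1 1 + (p 1 0 1 + p 1 1 1)) ≤ (p 0 1 0 + p 0 1 1 + p 0 1 2) / PA := by
    rw [le_div_iff₀ hX0pos]
    linarith [hnn 0 1 0, hnn 0 1 2]
  have hb1 : (p 0 0 1 + p 0 1 1 + (p 1 0 1 + p 1 1 1)) ≤ (p 1 1 0 + p 1 1 1 + p 1 1 2) / PB := by
    rw [le_div_iff₀ hPBpos]
    linarith [hnn 1 1 0, hnn 1 1 2]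
  have := add_le_add (le_min ha0 ha1) (le_min hb0 hb1)
  linarith
end

section
/- Let alpha, beta be real numbers with 0 <= alpha <= 1 and 0 <= beta <= 1, let M be the 2x2 matrix with rows (1-alpha, alpha) and (beta, 1-beta), let t >= 1 be a natural number, and let delta satisfy 0 < delta < 1. Let p be a probability distribution on triples (X0, Xt, Q) with X0, Xt in {A, B} and Q in {a, b, ab} such that: (i) the marginal of (X0, Xt) is Pr(X0=A, Xt=x) = delta * (M^t)_{A,x} and Pr(X0=B, Xt=x) = (1-delta) * (M^t)_{B,x}; (ii) Q is independent of X0; (iii) Pr(Q=a and Xt=B) = 0 and Pr(Q=b and Xt=A) = 0. Then Pr(Q=ab) >= |1 - alpha - beta|^t. -/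
open Finset

lemma rowsum (α β : ℝ) (t : ℕ) (i : Fin 2) :
    ((!![1-α,α;β,1-β] : Matrix (Fin 2) (Fin 2) ℝ)^t) i 0
      + ((!![1-α,α;β,1-β] : Matrix (Fin 2) (Fin 2) ℝ)^t) i 1 = 1 := by
  induction t with
  | zero => fin_cases i <;> simp [Matrix.one_apply]
  | succ n ih =>
    rw [pow_succ]
    fin_cases i <;>
    · simp only [Matrix.mul_apply, Fin.sum_univ_two, Matrix.cons_val_zero, Matrix.cons_val_one,
        Matrix.head_cons, Matrix.cons_val', Matrix.empty_val', Matrix.cons_val_fin_one,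
        Matrix.head_fin_const, Matrix.of_apply] at *
      nlinarith [ih]

lemma coldiff (α β : ℝ) (t : ℕ) :
    ((!![1-α,α;β,1-β] : Matrix (Fin 2) (Fin 2) ℝ)^t) 0 0
      - ((!![1-α,α;β,1-β] : Matrix (Fin 2) (Fin 2) ℝ)^t) 1 0 = (1-α-β)^t := by
  induction t with
  | zero => simp [Matrix.one_apply]
  | succ n ih =>
    rw [pow_succ']
    simp only [Matrix.mul_apply, Fin.sum_univ_two, Matrix.cons_val_zero, Matrix.cons_val_one,
      Matrix.head_cons, Matrix.cons_val', Matrix.empty_val', Matrix.cons_val_fin_one,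
      Matrix.head_fin_const, Matrix.of_apply] at *
    rw [pow_succ']
    linear_combination (1-α-β) * ih

/- Encoding: `X₀, Xₜ : Fin 2` with `0 = A`, `1 = B`; `Q : Fin 3` with `0 = a`, `1 = b`,
`2 = ab`. The joint distribution is `p x0 xt q = Pr(X₀ = x0, Xₜ = xt, Q = q)`. -/

theorem stmt4 (α β : ℝ) (hα0 : 0 ≤ α) (hα1 : α ≤ 1) (hβ0 : 0 ≤ β) (hβ1 : β ≤ 1)
    (t : ℕ) (ht : 1 ≤ t) (δ : ℝ) (hδ0 : 0 < δ) (hδ1 : δ < 1)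
    (p : Fin 2 → Fin 2 → Fin 3 → ℝ)
    -- p is a probability distribution
    (hnn : ∀ x0 xt q, 0 ≤ p x0 xt q)
    (hsum : ∑ x0, ∑ xt, ∑ q, p x0 xt q = 1)
    -- (i) the marginal of (X₀, Xₜ) is given by δ and the t-step transition matrix Mᵗ
    (hmargA : ∀ x : Fin 2, (∑ q, p 0 x q)
      = δ * ((!![1 - α, α; β, 1 - β] : Matrix (Fin 2) (Fin 2) ℝ) ^ t) 0 x)
    (hmargB : ∀ x : Fin 2, (∑ q, p 1 x q)
      = (1 - δ) * ((!![1 - α, α; β, 1 - β] : Matrix (Fin 2) (Fin 2) ℝ) ^ t) 1 x)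
    -- (ii) independence of Q and X₀: Pr(Q = q ∧ X₀ = x0) = Pr(Q = q) · Pr(X₀ = x0)
    (hind : ∀ (q : Fin 3) (x0 : Fin 2),
      (∑ xt, p x0 xt q)
        = (∑ x0', ∑ xt, p x0' xt q) * (∑ xt, ∑ q', p x0 xt q'))
    -- (iii) decodability: Pr(Q = a ∧ Xₜ = B) = 0 and Pr(Q = b ∧ Xₜ = A) = 0
    (hdeca : ∑ x0, p x0 1 0 = 0)
    (hdecb : ∑ x0, p x0 0 1 = 0) :
    -- conclusion: Pr(Q = ab) ≥ |1 - α - β|^t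
    |1 - α - β| ^ t ≤ ∑ x0, ∑ xt, p x0 xt 2 := by
  have h1 := rowsum α β t 0
  have h2 := rowsum α β t 1
  have h3 := coldiff α β t
  have mX0 : (∑ xt, ∑ q', p 0 xt q') = δ := by
    rw [Fin.sum_univ_two, hmargA 0, hmargA 1]
    linear_combination δ * h1
  have mX1 : (∑ xt, ∑ q', p 1 xt q') = 1 - δ := by
    rw [Fin.sum_univ_two, hmargB 0, hmargB 1]
    linear_combination (1 - δ) * h2
  have ia0 := hind 0 0
  have ia1 := hind 0 1
  have ib0 := hind 1 0
  have ib1 := hind 1 1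
  rw [mX0] at ia0 ib0
  rw [mX1] at ia1 ib1
  have hA0 := hmargA 0
  have hA1 := hmargA 1
  have hB0 := hmargB 0
  have hB1 := hmargB 1
  simp only [Fin.sum_univ_two, Fin.sum_univ_three] at ia0 ia1 ib0 ib1 hA0 hA1 hB0 hB1 hsum hdeca hdecb ⊢
  set m00 := ((!![1 - α, α; β, 1 - β] : Matrix (Fin 2) (Fin 2) ℝ) ^ t) 0 0 with hm00
  set m01 := ((!![1 - α, α; β, 1 - β] : Matrix (Fin 2) (Fin 2) ℝ) ^ t) 0 1 with hm01
  set m10 := ((!![1 - α, α; β, 1 - β] : Matrix (Fin 2) (Fin 2) ℝ) ^ t) 1 0 with hm10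
  set m11 := ((!![1 - α, α; β, 1 - β] : Matrix (Fin 2) (Fin 2) ℝ) ^ t) 1 1 with hm11
  have z1 : p 0 1 0 = 0 := by linarith [hnn 0 1 0, hnn 1 1 0]
  have z2 : p 1 1 0 = 0 := by linarith [hnn 0 1 0, hnn 1 1 0]
  have z3 : p 0 0 1 = 0 := by linarith [hnn 0 0 1, hnn 1 0 1]
  have z4 : p 1 0 1 = 0 := by linarith [hnn 0 0 1, hnn 1 0 1]
  clear hmargA hmargB hind mX0 mX1
  set sa := p 0 0 0 + p 0 1 0 + (p 1 0 0 + p 1 1 0) with hsa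
  set sb := p 0 0 1 + p 0 1 1 + (p 1 0 1 + p 1 1 1) with hsb
  have hδ1' : (0:ℝ) < 1 - δ := by linarith
  have b1 : sa ≤ m00 :=
    le_of_mul_le_mul_right (by linarith [hnn 0 0 2]) hδ0
  have b2 : sa ≤ m10 :=
    le_of_mul_le_mul_right (by linarith [hnn 1 0 2]) hδ1'
  have b3 : sb ≤ m01 :=
    le_of_mul_le_mul_right (by linarith [hnn 0 1 2]) hδ0
  have b4 : sb ≤ m11 :=
    le_of_mul_le_mul_right (by linarith [hnn 1 1 2]) hδ1'
  have hS : p 0 0 2 + p 0 1 2 + (p 1 0 2 + p 1 1 2) = 1 - sa - sb := by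
    linear_combination hsum - ia0 - ia1 - ib0 - ib1
  rw [hS, ← abs_pow, abs_le]
  constructor
  · linarith [b1, b4, h2, h3]
  · linarith [b2, b3, h1, h3]
end

section
/- Let alpha, beta be real numbers with 0 <= alpha <= 1 and 0 <= beta <= 1, let M be the 2x2 matrix with rows (1-alpha, alpha) and (beta, 1-beta), let t >= 1 be a natural number, and let delta satisfy 0 < delta < 1. Then there exists a probability distribution p on triples (X0, Xt, Q) with X0, Xt in {A, B} and Q in {a, b, ab} such that: (i) Pr(X0=A, Xt=x) = delta * (M^t)_{A,x} and Pr(X0=B, Xt=x) = (1-delta) * (M^t)_{B,x}; (ii) Q is independent of X0; (iii) Pr(Q=a and Xt=B) = 0 and Pr(Q=b and Xt=A) = 0; and (iv) Pr(Q=ab) = |1 - alpha - beta|^t. -/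
open Finset

lemma pow_entries_aux (α β : ℝ) (hα0 : 0 ≤ α) (hα1 : α ≤ 1) (hβ0 : 0 ≤ β) (hβ1 : β ≤ 1) :
    ∀ t : ℕ, ∃ a b : ℝ, 0 ≤ a ∧ a ≤ 1 ∧ 0 ≤ b ∧ b ≤ 1 ∧ a - b = (1-α-β)^t ∧
      (!![1-α, α; β, 1-β] : Matrix (Fin 2) (Fin 2) ℝ)^t = !![a, 1-a; b, 1-b] := by
  intro t
  induction t with
  | zero =>
    exact ⟨1, 0, by norm_num, by norm_num, le_refl 0, by norm_num, by norm_num,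
      by rw [pow_zero, Matrix.one_fin_two]; norm_num⟩
  | succ n ih =>
    obtain ⟨a, b, ha0, ha1, hb0, hb1, hab, hM⟩ := ih
    refine ⟨β + a*(1-α-β), β + b*(1-α-β), ?_, ?_, ?_, ?_, ?_, ?_⟩
    · nlinarith
    · nlinarith
    · nlinarith
    · nlinarith
    · rw [pow_succ, ← hab]; ring
    · rw [pow_succ, hM, Matrix.mul_fin_two]
      ext i j
      fin_cases i <;> fin_cases j <;> simp <;> ring

/- Encoding: `X₀, Xₜ : Fin 2` with `0 = A`, `1 = B`; `Q : Fin 3` with `0 = a`, `1 = b`,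
`2 = ab`. A joint distribution is `p x0 xt q = Pr(X₀ = x0, Xₜ = xt, Q = q)`. -/

set_option maxHeartbeats 1000000 in
theorem stmt5 (α β : ℝ) (hα0 : 0 ≤ α) (hα1 : α ≤ 1) (hβ0 : 0 ≤ β) (hβ1 : β ≤ 1)
    (t : ℕ) (ht : 1 ≤ t) (δ : ℝ) (hδ0 : 0 < δ) (hδ1 : δ < 1) :
    ∃ p : Fin 2 → Fin 2 → Fin 3 → ℝ,
      -- p is a probability distribution
      (∀ x0 xt q, 0 ≤ p x0 xt q) ∧
      (∑ x0, ∑ xt, ∑ q, p x0 xt q = 1) ∧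
      -- (i) the marginal of (X₀, Xₜ) is given by δ and the t-step transition matrix Mᵗ
      (∀ x : Fin 2, (∑ q, p 0 x q)
        = δ * ((!![1 - α, α; β, 1 - β] : Matrix (Fin 2) (Fin 2) ℝ) ^ t) 0 x) ∧
      (∀ x : Fin 2, (∑ q, p 1 x q)
        = (1 - δ) * ((!![1 - α, α; β, 1 - β] : Matrix (Fin 2) (Fin 2) ℝ) ^ t) 1 x) ∧
      -- (ii) independence of Q and X₀: Pr(Q = q ∧ X₀ = x0) = Pr(Q = q) · Pr(X₀ = x0)
      (∀ (q : Fin 3) (x0 : Fin 2),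
        (∑ xt, p x0 xt q)
          = (∑ x0', ∑ xt, p x0' xt q) * (∑ xt, ∑ q', p x0 xt q')) ∧
      -- (iii) decodability: Pr(Q = a ∧ Xₜ = B) = 0 and Pr(Q = b ∧ Xₜ = A) = 0
      (∑ x0, p x0 1 0 = 0) ∧
      (∑ x0, p x0 0 1 = 0) ∧
      -- (iv) Pr(Q = ab) = |1 - α - β|^t
      (∑ x0, ∑ xt, p x0 xt 2 = |1 - α - β| ^ t) := by
  obtain ⟨a, b, ha0, ha1, hb0, hb1, hab, hM⟩ :=
    pow_entries_aux α β hα0 hα1 hβ0 hβ1 t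
  set qa : ℝ := min a b with hqa
  set qb : ℝ := min (1 - a) (1 - b) with hqb
  have habs : |1 - α - β| ^ t = |a - b| := by
    rw [← abs_pow, hab]
  have hsum : qa + qb = 1 - |1 - α - β| ^ t := by
    rw [habs]
    rcases le_total a b with h | h
    · rw [abs_of_nonpos (by linarith), hqa, hqb,
        min_eq_left h, min_eq_right (by linarith)]
      ring
    · rw [abs_of_nonneg (by linarith), hqa, hqb,
        min_eq_right h, min_eq_left (by linarith)]
      ring
  have hqa0 : 0 ≤ qa := le_min ha0 hb0
  have hqb0 : 0 ≤ qb := le_min (by linarith) (by linarith)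
  have hqaa : qa ≤ a := min_le_left _ _
  have hqab : qa ≤ b := min_le_right _ _
  have hqba : qb ≤ 1 - a := min_le_left _ _
  have hqbb : qb ≤ 1 - b := min_le_right _ _
  refine ⟨![![![δ*qa, 0, δ*(a - qa)], ![0, δ*qb, δ*(1 - a - qb)]],
            ![![(1-δ)*qa, 0, (1-δ)*(b - qa)], ![0, (1-δ)*qb, (1-δ)*(1 - b - qb)]]],
    ?_, ?_, ?_, ?_, ?_, ?_, ?_, ?_⟩
  · intro x0 xt q
    fin_cases x0 <;> fin_cases xt <;> fin_cases q <;> simp <;> nlinarith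
  · simp [Fin.sum_univ_two, Fin.sum_univ_three]
    ring
  · intro x
    fin_cases x <;> simp [Fin.sum_univ_three, hM] <;> ring
  · intro x
    fin_cases x <;> simp [Fin.sum_univ_three, hM] <;> ring
  · intro q x0
    fin_cases q <;> fin_cases x0 <;>
      · simp [Fin.sum_univ_two, Fin.sum_univ_three]
        ring
  · simp [Fin.sum_univ_two]
  · simp [Fin.sum_univ_two]
  · simp [Fin.sum_univ_two]
    nlinarith [hsum]
end

section
/- Let alpha, beta be real numbers with 0 <= alpha <= 1 and 0 <= beta <= 1. If alpha + beta <= 1, let P be the 3x3 matrix with rows (1-alpha, alpha, 0), (beta, 1-beta, 0), (beta, alpha, 1-alpha-beta); if alpha + beta > 1, let P instead have third row (1-alpha, 1-beta, alpha+beta-1). Then for every natural number t, the (3,3) entry of P^t equals (1-alpha-beta)^t in the first case and (alpha+beta-1)^t in the second case; in both cases it equals |1-alpha-beta|^t. Consequently, for a Markov chain (Q_t) on states {A, B, AB} with transition matrix P started at Q_0 = AB, Pr(Q_t = AB) = |1 - alpha - beta|^t. -/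
open Finset

/-- Query transition matrix on states `0 = A`, `1 = B`, `2 = AB` for `α + β ≤ 1`. -/
def P1 (α β : ℝ) : Matrix (Fin 3) (Fin 3) ℝ :=
  !![1 - α, α, 0;
     β, 1 - β, 0;
     β, α, 1 - α - β]

/-- Query transition matrix on states `0 = A`, `1 = B`, `2 = AB` for `α + β > 1`. -/
def P2 (α β : ℝ) : Matrix (Fin 3) (Fin 3) ℝ :=
  !![1 - α, α, 0;
     β, 1 - β, 0;
     1 - α, 1 - β, α + β - 1]

lemma pow_entry (M : Matrix (Fin 3) (Fin 3) ℝ) (h0 : M 0 2 = 0) (h1 : M 1 2 = 0)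
    (t : ℕ) : (M ^ t) 2 2 = (M 2 2) ^ t := by
  induction t with
  | zero => simp [Matrix.one_apply]
  | succ n ih =>
    rw [pow_succ, pow_succ, Matrix.mul_apply, Fin.sum_univ_three, h0, h1, ih]
    ring

theorem stmt10 (α β : ℝ) (hα0 : 0 ≤ α) (hα1 : α ≤ 1) (hβ0 : 0 ≤ β) (hβ1 : β ≤ 1)
    (t : ℕ) :
    -- the (AB, AB) entry of the t-th power of the relevant transition matrix
    (α + β ≤ 1 → ((P1 α β) ^ t) 2 2 = (1 - α - β) ^ t) ∧
    (1 < α + β → ((P2 α β) ^ t) 2 2 = (α + β - 1) ^ t) ∧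
    -- in both cases its absolute value equals |1 - α - β|^t
    |((if α + β ≤ 1 then P1 α β else P2 α β) ^ t) 2 2| = |1 - α - β| ^ t ∧
    -- consequently, the Markov chain (Qₜ) with this transition matrix started at
    -- Q₀ = AB (distribution ![0, 0, 1]) satisfies Pr(Qₜ = AB) = |1 - α - β|^t
    Matrix.vecMul (![0, 0, 1] : Fin 3 → ℝ)
        ((if α + β ≤ 1 then P1 α β else P2 α β) ^ t) 2
      = |1 - α - β| ^ t := by
  have h1 : ∀ s : ℕ, ((P1 α β) ^ s) 2 2 = (1 - α - β) ^ s := fun s => by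
    have := pow_entry (P1 α β) (by simp [P1]) (by simp [P1]) s
    simpa [P1] using this
  have h2 : ∀ s : ℕ, ((P2 α β) ^ s) 2 2 = (α + β - 1) ^ s := fun s => by
    have := pow_entry (P2 α β) (by simp [P2]) (by simp [P2]) s
    simpa [P2] using this
  have habs : |((if α + β ≤ 1 then P1 α β else P2 α β) ^ t) 2 2| = |1 - α - β| ^ t := by
    split_ifs with h
    · rw [h1, abs_pow]
    · have e : |1 - α - β| = α + β - 1 := by
        rw [abs_of_nonpos (by linarith)]; ring
      rw [h2, e, abs_of_nonneg (pow_nonneg (by linarith) t)]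
  refine ⟨fun _ => h1 t, fun _ => h2 t, habs, ?_⟩
  rw [Matrix.vecMul, dotProduct, Fin.sum_univ_three]
  split_ifs with h
  · simp [h1, abs_of_nonneg (show (0:ℝ) ≤ 1 - α - β by linarith)]
  · have e : |1 - α - β| = α + β - 1 := by
      rw [abs_of_nonpos (by linarith)]; ring
    simp [h2, e]
end

section
/- Let p be a probability distribution on pairs (X, Q), where X takes values in {A, B} and Q takes values in {a, b, ab}. Assume: (i) 0 < Pr(X=A) < 1; (ii) Q is independent of X; (iii) decodability: Pr(Q=a and X=B) = 0 and Pr(Q=b and X=A) = 0. Then Pr(Q=ab) = 1. -/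
open Finset

/- Encoding: `X : Fin 2` with `0 = A`, `1 = B`; `Q : Fin 3` with `0 = a`, `1 = b`,
`2 = ab`. The joint distribution is `p x q = Pr(X = x, Q = q)`. -/

theorem stmt11 (p : Fin 2 → Fin 3 → ℝ)
    -- p is a probability distribution
    (hnn : ∀ x q, 0 ≤ p x q)
    (hsum : ∑ x, ∑ q, p x q = 1)
    -- (i) 0 < Pr(X = A) < 1
    (hXpos : 0 < ∑ q, p 0 q)
    (hXlt : (∑ q, p 0 q) < 1)
    -- (ii) independence: Pr(Q = q ∧ X = x) = Pr(Q = q) · Pr(X = x)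
    (hind : ∀ (q : Fin 3) (x : Fin 2),
      p x q = (∑ x', p x' q) * (∑ q', p x q'))
    -- (iii) decodability: Pr(Q = a ∧ X = B) = 0 and Pr(Q = b ∧ X = A) = 0
    (hdeca : p 1 0 = 0)
    (hdecb : p 0 1 = 0) :
    -- conclusion: Pr(Q = ab) = 1
    ∑ x, p x 2 = 1 := by
  have h00 := hind 0 0
  have h11 := hind 1 1
  simp only [Fin.sum_univ_two, Fin.sum_univ_three] at *
  have h1 : p 0 0 = 0 := by nlinarith [hnn 0 0]
  have h2 : p 1 1 = 0 := by nlinarith [hnn 1 1]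
  linarith
end
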